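/- arXiv:1601.05006 — 5 statements merged into one kernel-verified Lean document; each statement's English description precedes it below -/
import Mathlib

section
/- Along the flow of the generalized Lotka-Volterra system ẋ_i = x_i(Σ_{j>i} a_j x_j − Σ_{j<i} a_j x_j), the functions v_i = a_1 x_1 + ... + a_i x_i satisfy the decoupled equations v̇_i = v_i(H − v_i), where H = v_n. -/
/-!
Since `ẋ_k = x_k (H - v_{k+1} - v_k)` and `a_k x_k = v_{k+1} - v_k`, the term `a_k ẋ_k` equals
`φ(v_{k+1}) - φ(v_k)` for `φ y = y (H - y)`. Hence `v̇_i = Σ_{k<i} a_k ẋ_k` telescopes to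
`φ(v_i) - φ(v_0) = v_i (H - v_i)`.
-/

open Finset Real

/-- partial derivative of `f` in the `i`-th coordinate direction -/
noncomputable def pd {n : ℕ} (i : Fin n) (f : (Fin n → ℝ) → ℝ) (x : Fin n → ℝ) : ℝ :=
  fderiv ℝ f x (Pi.single i 1)

/-- the quadratic Poisson bracket `{x_i,x_j} = x_i x_j` for `i < j` -/
noncomputable def pb {n : ℕ} (f g : (Fin n → ℝ) → ℝ) (x : Fin n → ℝ) : ℝ :=
  ∑ i : Fin n, ∑ j : Fin n,
    if i < j then x i * x j * (pd i f x * pd j g x - pd j f x * pd i g x) else 0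

/-- `v a j x = a_1 x_1 + ⋯ + a_j x_j` (sum of the first `j` terms, 1-based). -/
noncomputable def v {n : ℕ} (a : Fin n → ℝ) (j : ℕ) (x : Fin n → ℝ) : ℝ :=
  ∑ k : Fin n, if (k : ℕ) < j then a k * x k else 0

/-- right-hand side of the generalized Lotka–Volterra system -/
noncomputable def rhs {n : ℕ} (a : Fin n → ℝ) (x : Fin n → ℝ) (i : Fin n) : ℝ :=
  x i * ((∑ j : Fin n, if i < j then a j * x j else 0)
        - ∑ j : Fin n, if j < i then a j * x j else 0)

/-- `J k = (x_1 x_3 ⋯ x_{2k-1})/(x_2 x_4 ⋯ x_{2k})` (1-based indexing). -/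
noncomputable def J {n : ℕ} (k : ℕ) (x : Fin n → ℝ) : ℝ :=
  ∏ m : Fin n, if (m : ℕ) < 2 * k then
    (if (m : ℕ) % 2 = 0 then x m else (x m)⁻¹) else 1

/-- `I k = (x_{2k+2} x_{2k+4} ⋯ x_n)/(x_{2k+1} x_{2k+3} ⋯ x_{n-1})` (1-based, n even). -/
noncomputable def Ifun {n : ℕ} (k : ℕ) (x : Fin n → ℝ) : ℝ :=
  ∏ m : Fin n, if 2 * k ≤ (m : ℕ) then
    (if (m : ℕ) % 2 = 1 then x m else (x m)⁻¹) else 1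

theorem Fin.sum_ite_val_lt_succ {M : Type*} [AddCommMonoid M] {n : ℕ} (f : Fin n → M) (i : ℕ) :
    (∑ k : Fin n, if (k : ℕ) < i + 1 then f k else 0) =
      (∑ k : Fin n, if (k : ℕ) < i then f k else 0) + if h : i < n then f ⟨i, h⟩ else 0 := by
  by_cases h : i < n
  · have hsplit (k : Fin n) : (if (k : ℕ) < i + 1 then f k else 0) =
        (if (k : ℕ) < i then f k else 0) + if k = ⟨i, h⟩ then f k else 0 := by
      rcases lt_trichotomy (k : ℕ) i with hk | hk | hk
      · simp [hk, Nat.lt_succ_of_lt hk, Fin.ext_iff, hk.ne]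
      · simp [hk, Fin.ext_iff]
      · simp [hk.not_gt, Nat.not_lt.mpr hk, Fin.ext_iff, hk.ne']
    rw [Finset.sum_congr rfl fun k _ => hsplit k, Finset.sum_add_distrib, Finset.sum_ite_eq',
      dif_pos h, if_pos (Finset.mem_univ _)]
  · simp only [h, dite_false, add_zero]
    refine Finset.sum_congr rfl fun k _ => ?_
    have : (k : ℕ) < i := by omega
    simp [this, Nat.lt_succ_of_lt this]

section LotkaVolterra

variable {n : ℕ} (a x : Fin n → ℝ)

theorem v_succ (k : ℕ) :
    v a (k + 1) x = v a k x + if h : k < n then a ⟨k, h⟩ * x ⟨k, h⟩ else 0 :=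
  Fin.sum_ite_val_lt_succ _ k

theorem sum_ite_gt_eq_v_sub (k : Fin n) :
    (∑ j : Fin n, if k < j then a j * x j else 0) = v a n x - v a (k + 1) x := by
  rw [eq_sub_iff_add_eq, v, v, ← Finset.sum_add_distrib]
  refine Finset.sum_congr rfl fun j _ => ?_
  rcases lt_or_ge k j with h | h
  · simp [h, Nat.not_lt.mpr (Fin.lt_def.mp h)]
  · simp [h.not_gt, Nat.lt_succ_of_le (Fin.le_def.mp h)]

theorem rhs_eq (k : Fin n) : rhs a x k = x k * (v a n x - v a (k + 1) x - v a k x) := by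
  rw [rhs, sum_ite_gt_eq_v_sub]
  rfl

theorem a_mul_rhs_eq_sub (k : Fin n) :
    a k * rhs a x k =
      v a (k + 1) x * (v a n x - v a (k + 1) x) - v a k x * (v a n x - v a k x) := by
  rw [rhs_eq, v_succ a x k, dif_pos k.isLt]
  ring

theorem sum_ite_lt_a_mul_rhs (i : ℕ) :
    (∑ k : Fin n, if (k : ℕ) < i then a k * rhs a x k else 0) =
      v a i x * (v a n x - v a i x) := by
  induction i with
  | zero => simp [v]
  | succ i ih =>
    rw [Fin.sum_ite_val_lt_succ, ih]
    by_cases h : i < n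
    · rw [dif_pos h, a_mul_rhs_eq_sub]
      ring
    · rw [dif_neg h, v_succ, dif_neg h, add_zero, add_zero]

end LotkaVolterra

theorem v_decoupled_general (n : ℕ) (a : Fin n → ℝ) (x : ℝ → Fin n → ℝ) (t : ℝ)
    (hx : ∀ i : Fin n, HasDerivAt (fun s => x s i) (rhs a (x t) i) t)
    (i : ℕ) :
    HasDerivAt (fun s => v a i (x s))
      (v a i (x t) * (v a n (x t) - v a i (x t))) t := by
  rw [← sum_ite_lt_a_mul_rhs]
  refine HasDerivAt.fun_sum fun k _ => ?_
  by_cases h : (k : ℕ) < i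
  · simpa only [h, if_true] using (hx k).const_mul (a k)
  · simpa only [h, if_false] using hasDerivAt_const t (0 : ℝ)

/-- along the generalized Lotka–Volterra flow,
`v̇_i = v_i (H − v_i)` with `H = v_n`. -/
theorem v_decoupled (n : ℕ) (a : Fin n → ℝ) (x : ℝ → Fin n → ℝ) (t : ℝ)
    (hx : ∀ i : Fin n, HasDerivAt (fun s => x s i) (rhs a (x t) i) t)
    (i : ℕ) (hi : i ≤ n) :
    HasDerivAt (fun s => v a i (x s))
      (v a i (x t) * (v a n (x t) - v a i (x t))) t :=
  v_decoupled_general n a x t hx i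
end

section
/- For the Poisson bracket {x_i,x_j} = x_i x_j (i<j) on R^n, the functions J_k := (x_1 x_3 ⋯ x_{2k−1})/(x_2 x_4 ⋯ x_{2k}), for k = 1,...,⌊n/2⌋, pairwise Poisson commute: {J_k, J_l} = 0 for all k,l. -/
open Finset Real

/-!
Each `J k` is the Laurent monomial `x ^ e_k` with exponent vector
`e_k = (1, -1, …, 1, -1, 0, …, 0)` (`2k` nonzero entries). For the log-canonical bracket
`{x_i, x_j} = x_i x_j` one has `{x ^ a, x ^ b} = ω(a, b) x ^ (a + b)` with the constant skew form
`ω(a, b) = ∑_{i<j} (a_i b_j - a_j b_i)`. For `k ≤ l`, `ω(e_k, e_l) = ω(e_k, e_l - e_k)`, and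
`e_l - e_k` is supported strictly after `e_k`, so this equals `(∑ e_k) (∑ (e_l - e_k))`, which
vanishes because the entries of `e_k` sum to zero (or, when `2k > n`, because `e_l = e_k`).
-/

section SkewForm

variable {ι R : Type*} [Fintype ι] [LinearOrder ι] [CommRing R]

def skewForm (a b : ι → R) : R :=
  ∑ i, ∑ j, if i < j then a i * b j - a j * b i else 0

theorem skewForm_swap (a b : ι → R) : skewForm b a = -skewForm a b := by
  simp only [skewForm, ← Finset.sum_neg_distrib]
  refine Finset.sum_congr rfl fun i _ => Finset.sum_congr rfl fun j _ => ?_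
  split_ifs <;> ring

theorem skewForm_sub_self_right (a b : ι → R) : skewForm a (b - a) = skewForm a b := by
  refine Finset.sum_congr rfl fun i _ => Finset.sum_congr rfl fun j _ => ?_
  simp only [Pi.sub_apply]
  split_ifs <;> ring

theorem skewForm_eq_sum_mul_sum {a b : ι → R} (hab : ∀ i j, a i ≠ 0 → b j ≠ 0 → i < j) :
    skewForm a b = (∑ i, a i) * ∑ j, b j := by
  rw [Finset.sum_mul_sum]
  refine Finset.sum_congr rfl fun i _ => Finset.sum_congr rfl fun j _ => ?_
  have hvanish : ∀ i j, ¬i < j → a i * b j = 0 := fun i j hij => by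
    by_cases ha : a i = 0
    · rw [ha, zero_mul]
    · rw [not_not.mp (mt (hab i j ha) hij), mul_zero]
  split_ifs with hij
  · rw [hvanish j i (lt_asymm hij), sub_zero]
  · rw [hvanish i j hij]

theorem Int.cast_skewForm (a b : ι → ℤ) :
    ((skewForm a b : ℤ) : R) = skewForm (fun i => (a i : R)) fun i => (b i : R) := by
  simp [skewForm, apply_ite (Int.cast : ℤ → R)]

end SkewForm

section LaurentMonomial

variable {n : ℕ}

noncomputable def laurentMonomial (a : Fin n → ℤ) (x : Fin n → ℝ) : ℝ :=
  ∏ m, x m ^ a m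

theorem pd_laurentMonomial (a : Fin n → ℤ) {x : Fin n → ℝ} (hx : ∀ i, x i ≠ 0) (i : Fin n) :
    pd i (laurentMonomial a) x = a i * laurentMonomial a x / x i := by
  have hfactor : ∀ m, HasFDerivAt (fun y : Fin n → ℝ => y m ^ a m)
      ((a m * x m ^ (a m - 1)) • ContinuousLinearMap.proj (R := ℝ) m) x := fun m => by
    have hcoord : HasFDerivAt (fun y : Fin n → ℝ => y m) (ContinuousLinearMap.proj (R := ℝ) m) x :=
      hasFDerivAt_apply m x
    exact (hasDerivAt_zpow (a m) (x m) (Or.inl (hx m))).comp_hasFDerivAt x hcoord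
  have hprod := HasFDerivAt.finsetProd (u := Finset.univ) fun m _ => hfactor m
  unfold laurentMonomial
  rw [pd, hprod.fderiv, ← Finset.mul_prod_erase _ _ (Finset.mem_univ i)]
  simp only [_root_.sum_apply, smul_apply,
    ContinuousLinearMap.proj_apply, Pi.single_apply, smul_eq_mul, mul_ite, mul_one, mul_zero,
    Finset.sum_ite_eq', Finset.mem_univ, if_true, zpow_sub_one₀ (hx i)]
  ring

theorem pb_laurentMonomial (a b : Fin n → ℤ) {x : Fin n → ℝ} (hx : ∀ i, x i ≠ 0) :
    pb (laurentMonomial a) (laurentMonomial b) x =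
      laurentMonomial a x * laurentMonomial b x *
        skewForm (fun i => (a i : ℝ)) fun i => (b i : ℝ) := by
  rw [pb, skewForm, Finset.mul_sum]
  refine Finset.sum_congr rfl fun i _ => ?_
  rw [Finset.mul_sum]
  refine Finset.sum_congr rfl fun j _ => ?_
  simp only [pd_laurentMonomial _ hx, mul_ite, mul_zero]
  have hxi := hx i
  have hxj := hx j
  split_ifs
  · field_simp
  · rfl

end LaurentMonomial

def altExp (k m : ℕ) : ℤ :=
  if m < 2 * k then (-1) ^ m else 0

theorem altExp_of_le {k m : ℕ} (h : 2 * k ≤ m) : altExp k m = 0 :=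
  if_neg (not_lt.mpr h)

theorem altExp_eq_of_lt {k l m : ℕ} (hkl : k ≤ l) (hm : m < 2 * k) : altExp l m = altExp k m := by
  rw [altExp, altExp, if_pos hm, if_pos (by omega)]

theorem J_eq_laurentMonomial (n k : ℕ) :
    J (n := n) k = laurentMonomial fun m => altExp k m := by
  funext x
  refine Finset.prod_congr rfl fun m _ => ?_
  simp only [altExp]
  split_ifs with _ hm
  · simp [(Nat.even_iff.mpr hm).neg_one_pow]
  · simp [(Nat.odd_iff.mpr (Nat.mod_two_ne_zero.mp hm)).neg_one_pow]
  · simp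

theorem sum_altExp {k n : ℕ} (h : 2 * k ≤ n) : ∑ m : Fin n, altExp k m = 0 := by
  obtain ⟨d, rfl⟩ := Nat.exists_eq_add_of_le h
  rw [Fin.sum_univ_eq_sum_range (altExp k), Finset.sum_range_add,
    Finset.sum_eq_zero (s := Finset.range d) fun m _ => altExp_of_le (Nat.le_add_right _ _),
    add_zero]
  calc ∑ m ∈ Finset.range (2 * k), altExp k m = ∑ m ∈ Finset.range (2 * k), (-1 : ℤ) ^ m :=
        Finset.sum_congr rfl fun m hm => if_pos (Finset.mem_range.mp hm)
    _ = 0 := by rw [neg_one_geom_sum, if_pos (even_two_mul k)]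

theorem skewForm_altExp_of_le {n k l : ℕ} (hkl : k ≤ l) :
    skewForm (fun m : Fin n => altExp k m) (fun m => altExp l m) = 0 := by
  rw [← skewForm_sub_self_right, skewForm_eq_sum_mul_sum]
  · rcases le_or_gt (2 * k) n with hk | hk
    · rw [sum_altExp hk, zero_mul]
    · have hzero : ∀ m : Fin n, altExp l m - altExp k m = 0 := fun m =>
        sub_eq_zero.mpr (altExp_eq_of_lt hkl (by omega))
      simp only [Pi.sub_apply, hzero, Finset.sum_const_zero, mul_zero]
  · intro i j hi hj
    have hi' : (i : ℕ) < 2 * k := not_le.mp fun h => hi (altExp_of_le h)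
    have hj' : 2 * k ≤ (j : ℕ) := not_lt.mp fun h => hj (sub_eq_zero.mpr (altExp_eq_of_lt hkl h))
    exact Fin.lt_def.mpr (hi'.trans_le hj')

theorem skewForm_altExp {n : ℕ} (k l : ℕ) :
    skewForm (fun m : Fin n => altExp k m) (fun m => altExp l m) = 0 := by
  rcases le_total k l with hkl | hlk
  · exact skewForm_altExp_of_le hkl
  · rw [skewForm_swap, skewForm_altExp_of_le hlk, neg_zero]

theorem J_involutive_general (n : ℕ) (k l : ℕ)
    (x : Fin n → ℝ) (hx : ∀ i, x i ≠ 0) :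
    pb (J k) (J l) x = 0 := by
  rw [J_eq_laurentMonomial, J_eq_laurentMonomial, pb_laurentMonomial _ _ hx,
    ← Int.cast_skewForm, skewForm_altExp, Int.cast_zero, mul_zero]

/-- the functions `J_k` pairwise Poisson-commute. -/
theorem J_involutive (n : ℕ) (k l : ℕ)
    (hk1 : 1 ≤ k) (hk2 : k ≤ n / 2) (hl1 : 1 ≤ l) (hl2 : l ≤ n / 2)
    (x : Fin n → ℝ) (hx : ∀ i, x i ≠ 0) :
    pb (J k) (J l) x = 0 :=
  J_involutive_general n k l x hx
end

section
/- Let n be even, v_j = Σ_{m≤j} a_m x_m, and F_k := v_{2k} (x_{2k+2} x_{2k+4} ⋯ x_n)/(x_{2k+1} x_{2k+3} ⋯ x_{n−1}) for k = 1,...,n/2. Then {F_k, F_l} = 0 for all k, l; in particular each F_k Poisson-commutes with the Hamiltonian H = F_{n/2} = Σ a_i x_i. -/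
/-!
In the logarithmic coordinates `u_i = log x_i` the bracket is constant,
`{f, g} = ∑_{i<j} (D_i f D_j g - D_j f D_i g)` with `D_i = x_i ∂_i`. With `g_i = a_i x_i`
(indices from 0) one finds `D_i F_k = I_k (P_{i+1} - P_i)`, where `P_j = g_0 + ⋯ + g_{j-1}` for
`j ≤ 2k` and beyond `2k` the sequence `P` alternates `v_{2k}, 0, v_{2k}, 0, …`. Summation by parts
turns `{F_k, F_l}` into `I_k I_l ∑_j (P_j Q_{j+1} - P_{j+1} Q_j)`, and the terms at `2m` and
`2m + 1` cancel: either `P = Q` at `2m, 2m + 1, 2m + 2`, or one of `P, Q` takes the values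
`c, 0, c` there.
-/

open Finset Real

noncomputable def logPd {n : ℕ} (i : Fin n) (f : (Fin n → ℝ) → ℝ) (x : Fin n → ℝ) : ℝ :=
  x i * pd i f x

section Calculus

variable {n : ℕ}

lemma pb_eq_sum_logPd (f g : (Fin n → ℝ) → ℝ) (x : Fin n → ℝ) :
    pb f g x = ∑ i : Fin n, ∑ j : Fin n,
      if i < j then logPd i f x * logPd j g x - logPd j f x * logPd i g x else 0 := by
  unfold pb logPd
  congr! 3
  ring

lemma logPd_mul {f g : (Fin n → ℝ) → ℝ} {x : Fin n → ℝ} (hf : DifferentiableAt ℝ f x)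
    (hg : DifferentiableAt ℝ g x) (i : Fin n) :
    logPd i (fun y => f y * g y) x = logPd i f x * g x + f x * logPd i g x := by
  simp only [logPd, pd, fderiv_fun_mul hf hg, add_apply, smul_apply, smul_eq_mul]
  ring

lemma v_eq_sum_mul (a : Fin n → ℝ) (j : ℕ) :
    v a j = fun y => ∑ k : Fin n, (if (k : ℕ) < j then a k else 0) * y k := by
  funext y
  simp only [v, ite_mul, zero_mul]

lemma logPd_v (a x : Fin n → ℝ) (j : ℕ) (i : Fin n) :
    logPd i (v a j) x = if (i : ℕ) < j then a i * x i else 0 := by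
  have hderiv : HasFDerivAt (v a j) (∑ k : Fin n, (if (k : ℕ) < j then a k else 0) •
      (ContinuousLinearMap.proj k : (Fin n → ℝ) →L[ℝ] ℝ)) x := by
    rw [v_eq_sum_mul]
    exact HasFDerivAt.fun_sum fun k _ => (hasFDerivAt_apply (𝕜 := ℝ) k x).const_mul _
  rw [logPd, pd, hderiv.fderiv]
  simp only [FunLike.coe_sum, Finset.sum_apply, FunLike.coe_smul, Pi.smul_apply,
    ContinuousLinearMap.proj_apply, Pi.single_apply, smul_eq_mul, mul_ite, mul_one, mul_zero,
    Finset.sum_ite_eq', Finset.mem_univ, if_true]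
  split_ifs <;> ring

lemma logPd_prod_zpow (e : Fin n → ℤ) {x : Fin n → ℝ} (hx : ∀ i, x i ≠ 0) (i : Fin n) :
    logPd i (fun y => ∏ m, y m ^ e m) x = e i * ∏ m, x m ^ e m := by
  have hfactor : ∀ m, HasFDerivAt (fun y : Fin n → ℝ => y m ^ e m)
      ((e m * x m ^ (e m - 1)) • ContinuousLinearMap.proj m) x := fun m => by
    have hcoord : HasFDerivAt (fun y : Fin n → ℝ => y m)
        (ContinuousLinearMap.proj m : (Fin n → ℝ) →L[ℝ] ℝ) x := hasFDerivAt_apply m x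
    exact (hasDerivAt_zpow (e m) (x m) (Or.inl (hx m))).comp_hasFDerivAt x hcoord
  rw [logPd, pd, (HasFDerivAt.finsetProd fun m _ => hfactor m).fderiv]
  simp only [FunLike.coe_sum, Finset.sum_apply, FunLike.coe_smul, Pi.smul_apply,
    ContinuousLinearMap.proj_apply, Pi.single_apply, smul_eq_mul, mul_ite, mul_one, mul_zero,
    Finset.sum_ite_eq', Finset.mem_univ, if_true]
  rw [← Finset.mul_prod_erase univ _ (mem_univ i), zpow_sub_one₀ (hx i)]
  field_simp [hx i]

end Calculus

section Combinatorics

lemma sum_range_ite_lt {M : Type*} [AddCommMonoid M] (f : ℕ → M) {j n : ℕ} (hjn : j ≤ n) :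
    ∑ i ∈ range n, (if i < j then f i else 0) = ∑ i ∈ range j, f i := by
  rw [← Finset.sum_filter]
  congr 1
  ext i
  simp only [mem_filter, mem_range]
  omega

lemma sum_fin_lt_eq_sum_range {M : Type*} [AddCommMonoid M] (n : ℕ) (f : ℕ → ℕ → M) :
    ∑ i : Fin n, ∑ j : Fin n, (if i < j then f i j else 0) =
      ∑ j ∈ range n, ∑ i ∈ range j, f i j := by
  rw [Finset.sum_comm, ← Fin.sum_univ_eq_sum_range (fun j => ∑ i ∈ range j, f i j)]
  refine Finset.sum_congr rfl fun j _ => ?_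
  rw [← sum_range_ite_lt _ j.isLt.le,
    ← Fin.sum_univ_eq_sum_range (fun i => if i < (j : ℕ) then f i j else 0)]
  simp only [Fin.lt_def]

lemma sum_range_eq_zero_of_pairs {M : Type*} [AddCommGroup M] (f : ℕ → M)
    (hf : ∀ m, f (2 * m) + f (2 * m + 1) = 0) {n : ℕ} (hn : Even n) :
    ∑ j ∈ range n, f j = 0 := by
  obtain ⟨N, rfl⟩ := hn
  induction N with
  | zero => simp
  | succ N ih =>
    rw [show N + 1 + (N + 1) = N + N + 1 + 1 by ring, Finset.sum_range_succ, Finset.sum_range_succ,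
      ih, zero_add, ← two_mul, hf]

def casoratian (P Q : ℕ → ℝ) (j : ℕ) : ℝ := P j * Q (j + 1) - P (j + 1) * Q j

lemma sum_range_wedge_sub_eq_casoratian {P Q : ℕ → ℝ} (hP : P 0 = 0) (hQ : Q 0 = 0)
    (j : ℕ) :
    ∑ i ∈ range j,
      ((P (i + 1) - P i) * (Q (j + 1) - Q j) - (P (j + 1) - P j) * (Q (i + 1) - Q i)) =
    casoratian P Q j := by
  rw [Finset.sum_sub_distrib, ← Finset.sum_mul, ← Finset.mul_sum,
    Finset.sum_range_sub, Finset.sum_range_sub, hP, hQ, casoratian]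
  ring

end Combinatorics

def tailSign (K i : ℕ) : ℤ := if K ≤ i then (if i % 2 = 1 then 1 else -1) else 0

noncomputable def logGradPrefix (g : ℕ → ℝ) (K j : ℕ) : ℝ :=
  if j < K then ∑ t ∈ range j, g t else if j % 2 = 0 then ∑ t ∈ range K, g t else 0

section LogGradPrefix

variable (g : ℕ → ℝ) {K : ℕ}

lemma logGradPrefix_zero : logGradPrefix g K 0 = 0 := by
  rcases K.eq_zero_or_pos with rfl | hK <;> simp [logGradPrefix, *]

lemma logGradPrefix_of_le (hK : K % 2 = 0) {j : ℕ} (hj : j ≤ K) :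
    logGradPrefix g K j = ∑ t ∈ range j, g t := by
  rcases hj.lt_or_eq with hj | rfl
  · simp [logGradPrefix, hj]
  · simp [logGradPrefix, hK]

lemma logGradPrefix_succ_sub (hK : K % 2 = 0) (i : ℕ) :
    logGradPrefix g K (i + 1) - logGradPrefix g K i =
      (if i < K then g i else 0) + (∑ t ∈ range K, g t) * tailSign K i := by
  by_cases hi : i < K
  · rw [logGradPrefix_of_le g hK hi, logGradPrefix_of_le g hK hi.le, Finset.sum_range_succ]
    simp [tailSign, hi]
  · have hi' : ¬ i + 1 < K := by omega
    have hKi : K ≤ i := by omega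
    rcases Nat.mod_two_eq_zero_or_one i with hpar | hpar
    · have hpar' : (i + 1) % 2 = 1 := by omega
      simp [logGradPrefix, tailSign, hi, hi', hKi, hpar, hpar']
    · have hpar' : (i + 1) % 2 = 0 := by omega
      simp [logGradPrefix, tailSign, hi, hi', hKi, hpar, hpar']

lemma logGradPrefix_of_ge {j : ℕ} (hj : K ≤ j) :
    logGradPrefix g K j = if j % 2 = 0 then ∑ t ∈ range K, g t else 0 := by
  simp [logGradPrefix, hj.not_gt]

lemma casoratian_logGradPrefix_pair {L : ℕ} (hK : K % 2 = 0) (hL : L % 2 = 0) (m : ℕ) :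
    casoratian (logGradPrefix g K) (logGradPrefix g L) (2 * m) +
      casoratian (logGradPrefix g K) (logGradPrefix g L) (2 * m + 1) = 0 := by
  have h0 : 2 * m % 2 = 0 := by omega
  have h1 : (2 * m + 1) % 2 = 1 := by omega
  have h2 : (2 * m + 1 + 1) % 2 = 0 := by omega
  simp only [casoratian]
  by_cases hlow : 2 * m + 2 ≤ K ∧ 2 * m + 2 ≤ L
  · simp only [logGradPrefix_of_le g hK (show 2 * m ≤ K by omega),
      logGradPrefix_of_le g hK (show 2 * m + 1 ≤ K by omega),
      logGradPrefix_of_le g hK (show 2 * m + 1 + 1 ≤ K by omega),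
      logGradPrefix_of_le g hL (show 2 * m ≤ L by omega),
      logGradPrefix_of_le g hL (show 2 * m + 1 ≤ L by omega),
      logGradPrefix_of_le g hL (show 2 * m + 1 + 1 ≤ L by omega)]
    ring
  · rcases (show K ≤ 2 * m ∨ L ≤ 2 * m by omega) with hm | hm
    · simp [logGradPrefix_of_ge g hm, logGradPrefix_of_ge g (show K ≤ 2 * m + 1 by omega),
        logGradPrefix_of_ge g (show K ≤ 2 * m + 1 + 1 by omega), h0, h1, h2]
    · simp [logGradPrefix_of_ge g hm, logGradPrefix_of_ge g (show L ≤ 2 * m + 1 by omega),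
        logGradPrefix_of_ge g (show L ≤ 2 * m + 1 + 1 by omega), h0, h1, h2]

end LogGradPrefix

section Involutivity

variable {n : ℕ}

lemma Ifun_eq_prod_zpow (k : ℕ) :
    (Ifun k : (Fin n → ℝ) → ℝ) = fun y => ∏ m : Fin n, y m ^ tailSign (2 * k) m := by
  funext y
  refine Finset.prod_congr rfl fun m _ => ?_
  simp only [tailSign]
  split_ifs <;> simp

lemma v_eq_sum_range (a x : Fin n → ℝ) {g : ℕ → ℝ} (hg : ∀ m : Fin n, g m = a m * x m)
    {K : ℕ} (hK : K ≤ n) : v a K x = ∑ t ∈ range K, g t := by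
  rw [← sum_range_ite_lt g hK, ← Fin.sum_univ_eq_sum_range (fun t => if t < K then g t else 0)]
  simp only [v, hg]

lemma logPd_F (a : Fin n → ℝ) {x : Fin n → ℝ} (hx : ∀ i, x i ≠ 0) {g : ℕ → ℝ}
    (hg : ∀ m : Fin n, g m = a m * x m) {k : ℕ} (hk : 2 * k ≤ n) (i : Fin n) :
    logPd i (fun y => v a (2 * k) y * Ifun k y) x =
      Ifun k x * (logGradPrefix g (2 * k) (i + 1) - logGradPrefix g (2 * k) i) := by
  have hv : DifferentiableAt ℝ (v a (2 * k)) x := by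
    rw [v_eq_sum_mul]
    fun_prop
  have hI : DifferentiableAt ℝ (Ifun k) x := by
    rw [Ifun_eq_prod_zpow]
    fun_prop (disch := exact Or.inl (hx _))
  rw [logPd_mul hv hI, logPd_v, Ifun_eq_prod_zpow, logPd_prod_zpow _ hx,
    logGradPrefix_succ_sub g (by omega), v_eq_sum_range a x hg hk, ← hg]
  simp only [tailSign]
  split_ifs <;> push_cast <;> ring

lemma pb_F_eq_mul_sum_casoratian (a : Fin n → ℝ) {x : Fin n → ℝ} (hx : ∀ i, x i ≠ 0)
    {g : ℕ → ℝ} (hg : ∀ m : Fin n, g m = a m * x m) {k l : ℕ} (hk : 2 * k ≤ n)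
    (hl : 2 * l ≤ n) :
    pb (fun y => v a (2 * k) y * Ifun k y) (fun y => v a (2 * l) y * Ifun l y) x =
      Ifun k x * Ifun l x *
        ∑ j ∈ range n, casoratian (logGradPrefix g (2 * k)) (logGradPrefix g (2 * l)) j := by
  set P := logGradPrefix g (2 * k)
  set Q := logGradPrefix g (2 * l)
  calc _ = ∑ i : Fin n, ∑ j : Fin n, if i < j then Ifun k x * Ifun l x *
          ((P (i + 1) - P i) * (Q (j + 1) - Q j) - (P (j + 1) - P j) * (Q (i + 1) - Q i))
          else 0 := by
        simp only [pb_eq_sum_logPd, logPd_F a hx hg hk, logPd_F a hx hg hl]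
        congr! 3
        ring
    _ = Ifun k x * Ifun l x * ∑ j ∈ range n, ∑ i ∈ range j,
          ((P (i + 1) - P i) * (Q (j + 1) - Q j) - (P (j + 1) - P j) * (Q (i + 1) - Q i)) := by
        rw [← sum_fin_lt_eq_sum_range n fun i j =>
          (P (i + 1) - P i) * (Q (j + 1) - Q j) - (P (j + 1) - P j) * (Q (i + 1) - Q i)]
        simp only [Finset.mul_sum, mul_ite, mul_zero]
    _ = _ := by
        have hP : P 0 = 0 := logGradPrefix_zero g
        have hQ : Q 0 = 0 := logGradPrefix_zero g
        simp only [sum_range_wedge_sub_eq_casoratian hP hQ]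

lemma v_of_le (a x : Fin n → ℝ) {j : ℕ} (hj : n ≤ j) : v a j x = ∑ i, a i * x i :=
  Finset.sum_congr rfl fun m _ => if_pos (by omega)

lemma Ifun_of_le (x : Fin n → ℝ) {k : ℕ} (hk : n ≤ 2 * k) : Ifun k x = 1 :=
  Finset.prod_eq_one fun m _ => if_neg (by omega)

end Involutivity

/-- for `n` even, the functions `F_k = v_{2k} I_k` pairwise
Poisson-commute, and `F_{n/2} = H = Σ a_i x_i`. -/
theorem F_involutive (n : ℕ) (hn : Even n) (a : Fin n → ℝ)
    (x : Fin n → ℝ) (hx : ∀ i, x i ≠ 0) :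
    (∀ k l : ℕ, 1 ≤ k → k ≤ n / 2 → 1 ≤ l → l ≤ n / 2 →
      pb (fun y => v a (2 * k) y * Ifun k y) (fun y => v a (2 * l) y * Ifun l y) x = 0) ∧
    v a (2 * (n / 2)) x * Ifun (n / 2) x = ∑ i, a i * x i := by
  have hn2 : 2 * (n / 2) = n := Nat.two_mul_div_two_of_even hn
  refine ⟨fun k l _ hk _ hl => ?_, ?_⟩
  · let g : ℕ → ℝ := fun t => if h : t < n then a ⟨t, h⟩ * x ⟨t, h⟩ else 0
    have hg : ∀ m : Fin n, g m = a m * x m := fun m => by simp [g]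
    rw [pb_F_eq_mul_sum_casoratian a hx hg (by omega) (by omega),
      sum_range_eq_zero_of_pairs _ (casoratian_logGradPrefix_pair g (by omega) (by omega)) hn,
      mul_zero]
  · rw [v_of_le a x hn2.ge, Ifun_of_le x hn2.ge, mul_one]
end

section
/- Suppose a_{ℓ+1} ≠ 0 and a_1 = ... = a_ℓ = 0. For i ≤ ℓ, the function K_i := (H − a_{ℓ+1} x_{ℓ+1}) x_i / x_{ℓ+1} is a first integral of the generalized Lotka-Volterra system ẋ_i = x_i(H − v_i − v_{i−1}): its time derivative along the flow vanishes. -/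
open Finset Real

/-!
`H = ∑ a_m x_m` is conserved, since `∑ a_m ẋ_m` is an antisymmetric double sum. As `a` vanishes
below `ℓ + 1`, we get `ẋ_i = x_i H` for `i ≤ ℓ` and `ẋ_{ℓ+1} = x_{ℓ+1} G` with
`G = H - a_{ℓ+1} x_{ℓ+1}`, hence `Ġ = -a_{ℓ+1} x_{ℓ+1} G`. The logarithmic derivative of
`K_i = G x_i / x_{ℓ+1}` is therefore `-a_{ℓ+1} x_{ℓ+1} + H - G = 0`.
-/

namespace LotkaVolterra

variable {n : ℕ} (a y : Fin n → ℝ)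

theorem sum_mul_rhs_eq_zero : ∑ m, a m * rhs a y m = 0 := by
  set w : Fin n → ℝ := fun m => a m * y m
  have h_expand : ∀ m, a m * rhs a y m =
      (∑ j, if m < j then w m * w j else 0) - ∑ j, if j < m then w j * w m else 0 := by
    intro m
    simp only [rhs, w, Finset.mul_sum, mul_ite, mul_zero, mul_sub]
    rw [← Finset.sum_sub_distrib, ← Finset.sum_sub_distrib]
    exact Finset.sum_congr rfl fun j _ => by split_ifs <;> ring
  rw [Finset.sum_congr rfl fun m _ => h_expand m, Finset.sum_sub_distrib,
    Finset.sum_comm (f := fun m j => if j < m then w j * w m else 0), sub_self]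

theorem rhs_eq_of_forall_lt {i : Fin n} (h : ∀ j < i, a j = 0) :
    rhs a y i = y i * ((∑ m, a m * y m) - a i * y i) := by
  have h_below : (∑ j, if j < i then a j * y j else 0) = 0 :=
    Finset.sum_eq_zero fun j _ => ite_eq_right_iff.mpr fun hj => by simp [h j hj]
  have h_above : ∀ j, (if i < j then a j * y j else 0)
      = a j * y j - if j = i then a j * y j else 0 := by
    intro j
    rcases lt_trichotomy j i with hj | rfl | hj
    · simp [h j hj]
    · simp
    · simp [hj, hj.ne']
  rw [rhs, h_below, Finset.sum_congr rfl fun j _ => h_above j, Finset.sum_sub_distrib,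
    Finset.sum_ite_eq' Finset.univ i, if_pos (Finset.mem_univ i), sub_zero]

theorem hasDerivAt_sum_mul {x : ℝ → Fin n → ℝ} {t : ℝ}
    (hx : ∀ j, HasDerivAt (fun s => x s j) (rhs a (x t) j) t) :
    HasDerivAt (fun s => ∑ m, a m * x s m) 0 t := by
  simpa [sum_mul_rhs_eq_zero] using
    HasDerivAt.fun_sum fun m (_ : m ∈ Finset.univ) => (hx m).const_mul (a m)

end LotkaVolterra

open LotkaVolterra in
/-- Indices are 0-based: `⟨ℓ, hℓ⟩` is the paper's `ℓ + 1`. -/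
theorem K_first_integral_A_general (n : ℕ) (a : Fin n → ℝ) (ℓ : ℕ) (hℓ : ℓ < n)
    (hzero : ∀ m : Fin n, (m : ℕ) < ℓ → a m = 0)
    (i : Fin n) (hi : (i : ℕ) < ℓ)
    (x : ℝ → Fin n → ℝ) (t : ℝ)
    (hx : ∀ j : Fin n, HasDerivAt (fun s => x s j) (rhs a (x t) j) t)
    (hxl : x t ⟨ℓ, hℓ⟩ ≠ 0) :
    HasDerivAt (fun s =>
      ((∑ m, a m * x s m) - a ⟨ℓ, hℓ⟩ * x s ⟨ℓ, hℓ⟩) * x s i / x s ⟨ℓ, hℓ⟩) 0 t := by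
  set L : Fin n := ⟨ℓ, hℓ⟩
  set H := ∑ m, a m * x t m
  have hrhs_i : rhs a (x t) i = x t i * H := by
    rw [rhs_eq_of_forall_lt a _ fun j hj => hzero j (lt_trans (α := ℕ) hj hi), hzero i hi, zero_mul,
      sub_zero]
  have hrhs_L : rhs a (x t) L = x t L * (H - a L * x t L) :=
    rhs_eq_of_forall_lt a _ fun j hj => hzero j hj
  have hK := (((hasDerivAt_sum_mul a hx).fun_sub ((hx L).const_mul (a L))).fun_mul (hx i)).fun_div
    (hx L) hxl
  refine hK.congr_deriv ?_
  rw [hrhs_i, hrhs_L]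
  field_simp
  ring

/-- for `i ≤ ℓ` (1-based), `K_i = (H − a_{ℓ+1} x_{ℓ+1}) x_i / x_{ℓ+1}`
is a first integral of the generalized Lotka–Volterra system
(0-based: index `ℓ` plays the rôle of `ℓ+1`). -/
theorem K_first_integral_A (n : ℕ) (a : Fin n → ℝ) (ℓ : ℕ) (hℓ : ℓ < n)
    (hzero : ∀ m : Fin n, (m : ℕ) < ℓ → a m = 0)
    (hne : a ⟨ℓ, hℓ⟩ ≠ 0)
    (i : Fin n) (hi : (i : ℕ) < ℓ)
    (x : ℝ → Fin n → ℝ) (t : ℝ)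
    (hx : ∀ j : Fin n, HasDerivAt (fun s => x s j) (rhs a (x t) j) t)
    (hxl : x t ⟨ℓ, hℓ⟩ ≠ 0) :
    HasDerivAt (fun s =>
      ((∑ m, a m * x s m) - a ⟨ℓ, hℓ⟩ * x s ⟨ℓ, hℓ⟩) * x s i / x s ⟨ℓ, hℓ⟩) 0 t :=
  K_first_integral_A_general n a ℓ hℓ hzero i hi x t hx hxl
end

section
/- Let x⁰ ∈ R^n with h₀ := Σ a_i x_i⁰ ≠ 0, and set v_i⁰ := Σ_{k≤i} a_k x_k⁰. Then x_i(t) = x_i⁰ e^{t h₀} h₀² / [(h₀ + (e^{t h₀}−1) v_{i−1}⁰)(h₀ + (e^{t h₀}−1) v_i⁰)] solves the generalized Lotka-Volterra system ẋ_i = x_i(Σ_{j>i} a_j x_j − Σ_{j<i} a_j x_j) with x(0) = x⁰, on any interval containing 0 where the denominators are nonzero. -/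
open Finset Real

/-- explicit solution of the generalized Lotka–Volterra system when `h₀ ≠ 0` -/
noncomputable def sol {n : ℕ} (a : Fin n → ℝ) (x0 : Fin n → ℝ) (t : ℝ) (i : Fin n) : ℝ :=
  x0 i * Real.exp (t * (∑ m, a m * x0 m)) * (∑ m, a m * x0 m) ^ 2 /
    (((∑ m, a m * x0 m) + (Real.exp (t * (∑ m, a m * x0 m)) - 1) * v a (i : ℕ) x0)
      * ((∑ m, a m * x0 m) + (Real.exp (t * (∑ m, a m * x0 m)) - 1) * v a ((i : ℕ) + 1) x0))

/-! Write `D_j(t) = h₀ + (e^{t h₀} - 1) v_j⁰`, so that `D_j' = e^{t h₀} h₀ v_j⁰` and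
`x_i(t) = x_i⁰ e^{t h₀} h₀² / (D_{i-1} D_i)`. Since `D_j - D_{j-1} = (e^{t h₀} - 1) a_j x_j⁰`, the
partial sums of `a_k x_k(t)` telescope to `v_j(x(t)) = D_j'/D_j`; for `j = n` this is `h₀`, so `H`
is conserved. The logarithmic derivative of `x_i(t)` is `h₀ - D_{i-1}'/D_{i-1} - D_i'/D_i`, which is
then `H - v_{i-1} - v_i` evaluated along `x(t)`: the system in its second form. -/

section

variable {n : ℕ}

lemma v_zero (a x : Fin n → ℝ) : v a 0 x = 0 := by simp [v]

lemma v_self (a x : Fin n → ℝ) : v a n x = ∑ m, a m * x m :=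
  Finset.sum_congr rfl fun k _ => if_pos k.isLt

lemma v_succ_s16 (a x : Fin n → ℝ) {j : ℕ} (hj : j < n) :
    v a (j + 1) x = v a j x + a ⟨j, hj⟩ * x ⟨j, hj⟩ := by
  have hterm : ∀ k : Fin n, (if (k : ℕ) < j + 1 then a k * x k else 0)
      = (if (k : ℕ) < j then a k * x k else 0) + if k = ⟨j, hj⟩ then a k * x k else 0 := by
    intro k
    split_ifs <;> simp_all [Fin.ext_iff] <;> omega
  rw [v, Finset.sum_congr rfl fun k _ => hterm k, Finset.sum_add_distrib,
    Finset.sum_ite_eq' Finset.univ ⟨j, hj⟩ (fun k => a k * x k)]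
  simp [v]

lemma rhs_eq_mul_sub_v (a x : Fin n → ℝ) (i : Fin n) :
    rhs a x i = x i * (v a n x - v a ((i : ℕ) + 1) x - v a i x) := by
  have hupper : (∑ j : Fin n, if i < j then a j * x j else 0) = v a n x - v a ((i : ℕ) + 1) x := by
    rw [v_self, v, ← Finset.sum_sub_distrib]
    refine Finset.sum_congr rfl fun j _ => ?_
    simp only [Fin.lt_def]
    split_ifs <;> first | (exfalso; omega) | ring
  rw [rhs, hupper]
  rfl

noncomputable def solDen (a x0 : Fin n → ℝ) (t : ℝ) (j : ℕ) : ℝ :=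
  (∑ m, a m * x0 m) + (exp (t * ∑ m, a m * x0 m) - 1) * v a j x0

variable (a x0 : Fin n → ℝ)

lemma sol_eq (t : ℝ) (i : Fin n) :
    sol a x0 t i = x0 i * exp (t * ∑ m, a m * x0 m) * (∑ m, a m * x0 m) ^ 2 /
      (solDen a x0 t i * solDen a x0 t ((i : ℕ) + 1)) := rfl

lemma sol_zero (hh0 : (∑ m, a m * x0 m) ≠ 0) (i : Fin n) : sol a x0 0 i = x0 i := by
  simp only [sol, zero_mul, exp_zero, sub_self, add_zero, mul_one]
  field_simp

lemma hasDerivAt_solDen (t : ℝ) (j : ℕ) :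
    HasDerivAt (fun s => solDen a x0 s j)
      (exp (t * ∑ m, a m * x0 m) * (∑ m, a m * x0 m) * v a j x0) t :=
  ((((hasDerivAt_mul_const _).exp).sub_const 1).mul_const (v a j x0)).const_add _

lemma v_sol {t : ℝ} (hden : ∀ j ≤ n, solDen a x0 t j ≠ 0) :
    ∀ j ≤ n, v a j (sol a x0 t) =
      exp (t * ∑ m, a m * x0 m) * (∑ m, a m * x0 m) * v a j x0 / solDen a x0 t j := by
  intro j
  induction j with
  | zero => intro _; simp [v_zero]
  | succ j ih =>
    intro hj
    have hP := hden j (by omega)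
    have hQ := hden (j + 1) hj
    have hstep : solDen a x0 t (j + 1) = solDen a x0 t j
        + (exp (t * ∑ m, a m * x0 m) - 1) * (a ⟨j, hj⟩ * x0 ⟨j, hj⟩) := by
      rw [solDen, solDen, v_succ_s16 a x0 hj]
      ring
    rw [v_succ_s16 a _ hj, ih (by omega), sol_eq, v_succ_s16 a x0 hj]
    field_simp
    rw [hstep, solDen]
    ring

lemma v_self_sol {t : ℝ} (hden : ∀ j ≤ n, solDen a x0 t j ≠ 0) :
    v a n (sol a x0 t) = ∑ m, a m * x0 m := by
  have hn := hden n le_rfl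
  rw [v_sol a x0 hden n le_rfl, solDen, v_self]
  rw [solDen, v_self] at hn
  have hH : (∑ m, a m * x0 m) ≠ 0 := fun h => hn (by rw [h]; ring)
  field_simp
  ring

lemma hasDerivAt_sol {t : ℝ} {i : Fin n} (hi : solDen a x0 t i ≠ 0)
    (hi' : solDen a x0 t ((i : ℕ) + 1) ≠ 0) :
    HasDerivAt (fun s => sol a x0 s i)
      (sol a x0 t i * ((∑ m, a m * x0 m)
        - exp (t * ∑ m, a m * x0 m) * (∑ m, a m * x0 m) * v a ((i : ℕ) + 1) x0
          / solDen a x0 t ((i : ℕ) + 1)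
        - exp (t * ∑ m, a m * x0 m) * (∑ m, a m * x0 m) * v a i x0 / solDen a x0 t i)) t := by
  have hnum := ((hasDerivAt_mul_const (x := t) (∑ m, a m * x0 m)).exp.const_mul (x0 i)).mul_const
    ((∑ m, a m * x0 m) ^ 2)
  refine (hnum.div ((hasDerivAt_solDen a x0 t i).mul (hasDerivAt_solDen a x0 t ((i : ℕ) + 1)))
    (mul_ne_zero hi hi')).congr_deriv ?_
  rw [Pi.mul_apply, sol_eq]
  field_simp
  ring

end

/-- the explicit formula solves the generalized Lotka–Volterra
system with initial condition `x⁰`, whenever `h₀ ≠ 0`, at every time where the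
denominators are nonzero. -/
theorem explicit_solution_nonzero_h0 (n : ℕ) (a : Fin n → ℝ) (x0 : Fin n → ℝ)
    (hh0 : (∑ m, a m * x0 m) ≠ 0) :
    (∀ i, sol a x0 0 i = x0 i) ∧
    (∀ t : ℝ,
      (∀ j : ℕ, j ≤ n →
        (∑ m, a m * x0 m) + (Real.exp (t * (∑ m, a m * x0 m)) - 1) * v a j x0 ≠ 0) →
      ∀ i : Fin n, HasDerivAt (fun s => sol a x0 s i) (rhs a (sol a x0 t) i) t) := by
  refine ⟨sol_zero a x0 hh0, fun t hden i => ?_⟩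
  rw [rhs_eq_mul_sub_v, v_self_sol a x0 hden, v_sol a x0 hden _ i.isLt,
    v_sol a x0 hden _ i.isLt.le]
  exact hasDerivAt_sol a x0 (hden _ i.isLt.le) (hden _ i.isLt)
end
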